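/- Let Â_rw = D^{-1}(A+I) and Â*_rw = (D*)^{-1}(A*+I) be row-normalized adjacencies with self-loops of nonnegative matrices A and A* = A - Δ (with A* + I having positive diagonal). Then ‖Â*_rw - Â_rw‖_F ≤ ‖D - D*‖_F + ‖Δ‖_F ≤ (√N + 1)‖Δ‖_F, where D = diag((A+I)1), D* = diag((A*+I)1), provided all diagonal entries of D are at least 1. -/

import Mathlib

open scoped Matrix.Norms.L2Operator

/-- Frobenius norm of a real matrix. -/
noncomputable def frob {n m : ℕ} (A : Matrix (Fin n) (Fin m) ℝ) : ℝ :=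
  Real.sqrt (∑ i, ∑ j, (A i j) ^ 2)

/-- Spectral (ℓ2 operator) norm of a real matrix. -/
noncomputable def specNorm {n m : ℕ} (A : Matrix (Fin n) (Fin m) ℝ) : ℝ := ‖A‖

/-- Euclidean norm of the `i`-th row of a matrix. -/
noncomputable def rowNorm {n m : ℕ} (A : Matrix (Fin n) (Fin m) ℝ) (i : Fin n) : ℝ :=
  Real.sqrt (∑ j, (A i j) ^ 2)

/-- Row-normalized adjacency matrix with self-loops: `D⁻¹ (A + I)`. -/
noncomputable def rowNormalize {n : ℕ} (A : Matrix (Fin n) (Fin n) ℝ) :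
    Matrix (Fin n) (Fin n) ℝ :=
  Matrix.of fun i j =>
    (A i j + if i = j then 1 else 0) / (∑ k, (A i k + if i = k then 1 else 0))

/-- A matrix `U` recovers the labels `y` if each row is a class-representative vector and
distinct classes have distinct representatives. -/
def Recovers {N P C : ℕ} (U : Matrix (Fin N) (Fin P) ℝ) (y : Fin N → Fin C) : Prop :=
  ∃ u : Fin C → (Fin P → ℝ), (∀ i, U i = u (y i)) ∧ Function.Injective u

open Matrix

/-! Writing `D`, `D*` for the degree matrices of `A + 1` and `A* + 1`,
`Â*_rw - Â_rw = D⁻¹ (D - D*) Â*_rw + D⁻¹ (A* - A)`. Since `D ≥ 1`, `D⁻¹` shrinks every entry;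
`Â*_rw` is row-stochastic, so its rows have Euclidean norm at most `1` and
`‖(D - D*) Â*_rw‖_F ≤ ‖D - D*‖_F`; finally `D - D* = diag(Δ 1)` and Cauchy–Schwarz on each row
gives `‖Δ 1‖₂ ≤ √N ‖Δ‖_F`. -/

section Frobenius

variable {n m : ℕ}

lemma frob_eq_norm_toLp (M : Matrix (Fin n) (Fin m) ℝ) :
    frob M = ‖WithLp.toLp 2 (Function.uncurry M)‖ := by
  simp only [EuclideanSpace.norm_eq, Fintype.sum_prod_type, Real.norm_eq_abs, sq_abs]
  rfl

lemma frob_add_le (M M' : Matrix (Fin n) (Fin m) ℝ) : frob (M + M') ≤ frob M + frob M' := by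
  simp only [frob_eq_norm_toLp]
  exact norm_add_le (WithLp.toLp 2 (Function.uncurry M)) (WithLp.toLp 2 (Function.uncurry M'))

lemma frob_neg (M : Matrix (Fin n) (Fin m) ℝ) : frob (-M) = frob M := by
  simp [frob]

lemma frob_diagonal (d : Fin n → ℝ) : frob (diagonal d) = √(∑ i, d i ^ 2) := by
  simp [frob, diagonal_apply, ite_pow]

lemma frob_diagonal_inv_mul_le {d : Fin n → ℝ} (hd : ∀ i, 1 ≤ d i)
    (M : Matrix (Fin n) (Fin m) ℝ) : frob (diagonal d⁻¹ * M) ≤ frob M := by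
  refine Real.sqrt_le_sqrt (Finset.sum_le_sum fun i _ => Finset.sum_le_sum fun j _ => ?_)
  rw [diagonal_mul, Pi.inv_apply, mul_pow]
  exact mul_le_of_le_one_left (sq_nonneg _)
    (pow_le_one₀ (inv_nonneg.2 (zero_le_one.trans (hd i))) (inv_le_one_of_one_le₀ (hd i)))

lemma frob_diagonal_rowSum_le (M : Matrix (Fin n) (Fin m) ℝ) :
    frob (diagonal fun i => ∑ j, M i j) ≤ √m * frob M := by
  rw [frob_diagonal, frob, ← Real.sqrt_mul (Nat.cast_nonneg m), Finset.mul_sum]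
  refine Real.sqrt_le_sqrt (Finset.sum_le_sum fun i _ => ?_)
  simpa using sq_sum_le_card_mul_sum_sq (s := Finset.univ) (f := M i)

lemma sum_sq_le_one_of_mem_rowStochastic {P : Matrix (Fin n) (Fin n) ℝ}
    (hP : P ∈ rowStochastic ℝ (Fin n)) (i : Fin n) : ∑ j, P i j ^ 2 ≤ 1 := by
  calc ∑ j, P i j ^ 2 ≤ (∑ j, P i j) ^ 2 :=
        Finset.sum_sq_le_sq_sum_of_nonneg fun j _ => nonneg_of_mem_rowStochastic hP
    _ = 1 := by rw [sum_row_of_mem_rowStochastic hP, one_pow]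

lemma frob_diagonal_mul_le_of_mem_rowStochastic (c : Fin n → ℝ)
    {P : Matrix (Fin n) (Fin n) ℝ} (hP : P ∈ rowStochastic ℝ (Fin n)) :
    frob (diagonal c * P) ≤ frob (diagonal c) := by
  rw [frob_diagonal]
  refine Real.sqrt_le_sqrt (Finset.sum_le_sum fun i _ => ?_)
  simp_rw [diagonal_mul, mul_pow, ← Finset.mul_sum]
  exact mul_le_of_le_one_right (sq_nonneg _) (sum_sq_le_one_of_mem_rowStochastic hP i)

end Frobenius

section RowNormalize

variable {n : ℕ}

/-- The diagonal of `D` in `rowNormalize B = D⁻¹ (B + 1)`. -/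
noncomputable def selfLoopDegree (B : Matrix (Fin n) (Fin n) ℝ) (i : Fin n) : ℝ :=
  ∑ k, (B i k + if i = k then 1 else 0)

lemma rowNormalize_apply (B : Matrix (Fin n) (Fin n) ℝ) (i j : Fin n) :
    rowNormalize B i j = (B i j + if i = j then 1 else 0) / selfLoopDegree B i := rfl

lemma one_le_selfLoopDegree {B : Matrix (Fin n) (Fin n) ℝ} (hB : ∀ i j, 0 ≤ B i j)
    (i : Fin n) : 1 ≤ selfLoopDegree B i := by
  have hterm : ∀ k, 0 ≤ B i k + if i = k then 1 else 0 := fun k => by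
    have := hB i k; split_ifs <;> linarith
  have hdiag : B i i + 1 ≤ selfLoopDegree B i := by
    simpa [selfLoopDegree] using Finset.single_le_sum (fun k _ => hterm k) (Finset.mem_univ i)
  linarith [hB i i]

lemma rowNormalize_mem_rowStochastic {B : Matrix (Fin n) (Fin n) ℝ} (hB : ∀ i j, 0 ≤ B i j) :
    rowNormalize B ∈ rowStochastic ℝ (Fin n) := by
  have hd := fun i => zero_lt_one.trans_le (one_le_selfLoopDegree hB i)
  refine mem_rowStochastic_iff_sum.2 ⟨fun i j => ?_, fun i => ?_⟩
  · refine div_nonneg ?_ (hd i).le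
    have := hB i j; split_ifs <;> linarith
  · simp_rw [rowNormalize_apply, ← Finset.sum_div]
    exact div_self (hd i).ne'

lemma selfLoopDegree_sub_selfLoopDegree (B B' : Matrix (Fin n) (Fin n) ℝ) (i : Fin n) :
    selfLoopDegree B i - selfLoopDegree B' i = ∑ k, (B - B') i k := by
  simp [selfLoopDegree, ← Finset.sum_sub_distrib]

lemma diagonal_selfLoopDegree_sub (B B' : Matrix (Fin n) (Fin n) ℝ) :
    diagonal (selfLoopDegree B) - diagonal (selfLoopDegree B') =
      diagonal fun i => ∑ k, (B - B') i k := by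
  rw [diagonal_sub]
  simp_rw [selfLoopDegree_sub_selfLoopDegree]

lemma rowNormalize_sub_rowNormalize {B B' : Matrix (Fin n) (Fin n) ℝ}
    (hd : ∀ i, selfLoopDegree B i ≠ 0) (hd' : ∀ i, selfLoopDegree B' i ≠ 0) :
    rowNormalize B' - rowNormalize B = diagonal (selfLoopDegree B)⁻¹ *
      (diagonal (fun i => ∑ k, (B - B') i k) * rowNormalize B' + (B' - B)) := by
  ext i j
  have hdi := hd i
  have hd'i := hd' i
  rw [Matrix.sub_apply, diagonal_mul, Matrix.add_apply, diagonal_mul,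
    ← selfLoopDegree_sub_selfLoopDegree]
  simp only [Matrix.sub_apply, Pi.inv_apply, rowNormalize_apply]
  field_simp
  ring

end RowNormalize

theorem rowNormalize_difference_bound_general (N : ℕ) (A Δ : Matrix (Fin N) (Fin N) ℝ)
    (hAstar : ∀ i j, 0 ≤ (A - Δ) i j)
    (hD : ∀ i, 1 ≤ ∑ k, (A i k + if i = k then 1 else 0)) :
    frob (rowNormalize (A - Δ) - rowNormalize A)
        ≤ frob (Matrix.diagonal (fun i => ∑ k, (A i k + if i = k then 1 else 0)) -
            Matrix.diagonal (fun i => ∑ k, ((A - Δ) i k + if i = k then 1 else 0)))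
          + frob Δ
    ∧ frob (Matrix.diagonal (fun i => ∑ k, (A i k + if i = k then 1 else 0)) -
            Matrix.diagonal (fun i => ∑ k, ((A - Δ) i k + if i = k then 1 else 0)))
          + frob Δ
        ≤ (Real.sqrt N + 1) * frob Δ := by
  have hd : ∀ i, 1 ≤ selfLoopDegree A i := hD
  have hd' : ∀ i, 1 ≤ selfLoopDegree (A - Δ) i := one_le_selfLoopDegree hAstar
  have hdiag : diagonal (selfLoopDegree A) - diagonal (selfLoopDegree (A - Δ)) =
      diagonal fun i => ∑ k, Δ i k := by
    rw [diagonal_selfLoopDegree_sub, sub_sub_cancel]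
  change _ ≤ frob (diagonal (selfLoopDegree A) - diagonal (selfLoopDegree (A - Δ))) + _ ∧
    frob (diagonal (selfLoopDegree A) - diagonal (selfLoopDegree (A - Δ))) + _ ≤ _
  rw [hdiag]
  refine ⟨?_, by linarith [frob_diagonal_rowSum_le Δ]⟩
  rw [rowNormalize_sub_rowNormalize (fun i => (zero_lt_one.trans_le (hd i)).ne')
    (fun i => (zero_lt_one.trans_le (hd' i)).ne'), sub_sub_cancel, sub_sub_cancel_left]
  calc _ ≤ frob (diagonal (fun i => ∑ k, Δ i k) * rowNormalize (A - Δ) + -Δ) :=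
        frob_diagonal_inv_mul_le hd _
    _ ≤ _ := (frob_add_le _ _).trans (add_le_add
        (frob_diagonal_mul_le_of_mem_rowStochastic _ (rowNormalize_mem_rowStochastic hAstar))
        (frob_neg Δ).le)

theorem rowNormalize_difference_bound (N : ℕ) (A Δ : Matrix (Fin N) (Fin N) ℝ)
    (hA : ∀ i j, 0 ≤ A i j) (hAstar : ∀ i j, 0 ≤ (A - Δ) i j)
    (hD : ∀ i, 1 ≤ ∑ k, (A i k + if i = k then 1 else 0)) :
    frob (rowNormalize (A - Δ) - rowNormalize A)
        ≤ frob (Matrix.diagonal (fun i => ∑ k, (A i k + if i = k then 1 else 0)) -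
            Matrix.diagonal (fun i => ∑ k, ((A - Δ) i k + if i = k then 1 else 0)))
          + frob Δ
    ∧ frob (Matrix.diagonal (fun i => ∑ k, (A i k + if i = k then 1 else 0)) -
            Matrix.diagonal (fun i => ∑ k, ((A - Δ) i k + if i = k then 1 else 0)))
          + frob Δ
        ≤ (Real.sqrt N + 1) * frob Δ :=
  rowNormalize_difference_bound_general N A Δ hAstar hD
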